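/- Let $p\in(1,2)$ and let $u,v$ be positive differentiable functions on a domain $\Omega\subset\mathbb{R}^N$ with $\nabla\log u\ne\nabla\log v$ at a point. Then at that point, $|\nabla u|^{p-2}\nabla u\cdot\nabla\big(u-\tfrac{v^p}{u^p}u\big)+|\nabla v|^{p-2}\nabla v\cdot\nabla\big(v-\tfrac{u^p}{v^p}v\big)\ \ge\ C_p\,(u^p+v^p)\,\frac{|\nabla\log u-\nabla\log v|^2}{(|\nabla\log u|+|\nabla\log v|)^{2-p}}$ for some constant $C_p>0$ depending only on $p$. -/

import Mathlib

open scoped RealInnerProductSpace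

open Real

/-!
Write `a = ∇ log u`, `b = ∇ log v`. A direct computation turns the left-hand side into
`u^p D(a, b) + v^p D(b, a)`, where `D(a, b) = ‖a‖^p + (p - 1) ‖b‖^p - p ‖b‖^(p-2) ⟪a, b⟫` is
the Bregman divergence of `‖·‖^p`. For `1 < p ≤ 2` it is bounded below by
`p (p - 1) / 2 · ‖a - b‖² (‖a‖ + ‖b‖)^(p-2)`. In the radial direction this is the tangent-line
inequality for `x ↦ x^p - p (p - 1) / 2 · R^(p-2) (x - ‖b‖)²`, which is convex on `[0, R]` because
`x^p` has second derivative at least `p (p - 1) R^(p-2)` there; take `R = ‖a‖ + ‖b‖`. The angular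
part is controlled by Cauchy–Schwarz together with `(‖a‖ + ‖b‖)^(p-2) ≤ ‖b‖^(p-2)`.
-/

theorem ConvexOn.add_deriv_mul_sub_le {S : Set ℝ} {f : ℝ → ℝ} {f' x y : ℝ}
    (hf : ConvexOn ℝ S f) (hx : x ∈ S) (hy : y ∈ S) (hf' : HasDerivAt f f' x) :
    f x + f' * (y - x) ≤ f y := by
  rcases lt_trichotomy x y with hxy | rfl | hyx
  · have := hf.le_slope_of_hasDerivAt hx hy hxy hf'
    rw [slope_def_field, le_div_iff₀ (sub_pos.2 hxy)] at this
    linarith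
  · simp
  · have := hf.slope_le_of_hasDerivAt hy hx hyx hf'
    rw [slope_def_field, div_le_iff₀ (sub_pos.2 hyx)] at this
    linarith

theorem rpow_sub_two_mul_sq {s p : ℝ} (hs : 0 ≤ s) (hp : p ≠ 0) :
    s ^ (p - 2) * s ^ 2 = s ^ p := by
  rw [← rpow_add_natCast' hs (by simpa using hp)]
  norm_num

theorem convexOn_rpow_sub_mul_sq {p R t : ℝ} (hp1 : 1 ≤ p) (hp2 : p ≤ 2) :
    ConvexOn ℝ (Set.Icc 0 R) (fun x => x ^ p - p * (p - 1) / 2 * R ^ (p - 2) * (x - t) ^ 2) := by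
  set K := p * (p - 1) / 2 * R ^ (p - 2)
  refine convexOn_of_hasDerivWithinAt2_nonneg (convex_Icc _ _)
    (f' := fun x => p * x ^ (p - 1) - K * (2 * (x - t)))
    (f'' := fun x => p * ((p - 1) * x ^ (p - 1 - 1)) - K * 2) ?_ ?_ ?_ ?_
  · exact ((continuous_rpow_const (by linarith)).sub (by fun_prop)).continuousOn
  · rintro x hx
    rw [interior_Icc] at hx
    refine ((hasDerivAt_rpow_const (Or.inl hx.1.ne')).sub ?_).hasDerivWithinAt
    simpa using (((hasDerivAt_id x).sub_const t).pow 2).const_mul K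
  · rintro x hx
    rw [interior_Icc] at hx
    refine (((hasDerivAt_rpow_const (Or.inl hx.1.ne')).const_mul p).sub ?_).hasDerivWithinAt
    simpa using (((hasDerivAt_id x).sub_const t).const_mul 2).const_mul K
  · rintro x hx
    rw [interior_Icc] at hx
    have hpow : R ^ (p - 2) ≤ x ^ (p - 2) := rpow_le_rpow_of_nonpos hx.1 hx.2.le (by linarith)
    have hp : 0 ≤ p * (p - 1) := by nlinarith
    rw [show p - 1 - 1 = p - 2 by ring]
    simp only [K]
    nlinarith [mul_le_mul_of_nonneg_left hpow hp]

theorem rpow_tangent_gap_lower_bound {p s t : ℝ} (hp1 : 1 ≤ p) (hp2 : p ≤ 2) (hs : 0 ≤ s)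
    (ht : 0 ≤ t) :
    p * (p - 1) / 2 * (s + t) ^ (p - 2) * (s - t) ^ 2 ≤
      s ^ p + (p - 1) * t ^ p - p * s * t ^ (p - 1) := by
  have htangent := (convexOn_rpow_sub_mul_sq (R := s + t) (t := t) hp1 hp2).add_deriv_mul_sub_le
    ⟨ht, by linarith⟩ ⟨hs, by linarith⟩
    ((hasDerivAt_rpow_const (Or.inr hp1)).sub
      ((((hasDerivAt_id' t).sub_const t).pow 2).const_mul _))
  have htt : t ^ (p - 1) * t = t ^ p := by
    rw [← rpow_add_one' ht (by linarith), sub_add_cancel]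
  linear_combination htangent + p * htt

section BregmanBound

variable {E : Type*} [NormedAddCommGroup E] [InnerProductSpace ℝ E]

theorem norm_rpow_bregman_lower_bound {p : ℝ} (hp1 : 1 < p) (hp2 : p ≤ 2) (a b : E) :
    p * (p - 1) / 2 * (‖a - b‖ ^ 2 / (‖a‖ + ‖b‖) ^ (2 - p)) ≤
      ‖a‖ ^ p + (p - 1) * ‖b‖ ^ p - p * ‖b‖ ^ (p - 2) * ⟪a, b⟫ := by
  have hgap := rpow_tangent_gap_lower_bound hp1.le hp2 (norm_nonneg a) (norm_nonneg b)
  set s := ‖a‖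
  set t := ‖b‖
  have hst : 0 ≤ s + t := by positivity
  have hsplit : ‖a - b‖ ^ 2 = (s - t) ^ 2 + 2 * (s * t - ⟪a, b⟫) := by
    rw [norm_sub_sq_real]; ring
  have hcs : ⟪a, b⟫ ≤ s * t := real_inner_le_norm a b
  have hcross : p * (p - 1) * (s + t) ^ (p - 2) * (s * t - ⟪a, b⟫) ≤
      p * t ^ (p - 2) * (s * t - ⟪a, b⟫) := by
    rcases eq_or_ne b 0 with rfl | hb
    · simp [t]
    have hpow : (s + t) ^ (p - 2) ≤ t ^ (p - 2) :=
      rpow_le_rpow_of_nonpos (norm_pos_iff.2 hb) (by linarith [norm_nonneg a]) (by linarith)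
    have hcoeff : p * (p - 1) * (s + t) ^ (p - 2) ≤ p * t ^ (p - 2) := by
      have hst_pow := rpow_nonneg hst (p - 2)
      nlinarith [mul_le_mul_of_nonneg_left hpow (by linarith : 0 ≤ p),
        mul_nonneg (mul_nonneg (by linarith : 0 ≤ p) (by linarith : 0 ≤ 2 - p)) hst_pow]
    exact mul_le_mul_of_nonneg_right hcoeff (by linarith)
  have htt : t ^ (p - 2) * t = t ^ (p - 1) := by
    rw [← rpow_add_one' (x := t) (norm_nonneg b) (by linarith)]
    ring_nf
  have hdiv : ‖a - b‖ ^ 2 / (s + t) ^ (2 - p) = ‖a - b‖ ^ 2 * (s + t) ^ (p - 2) := by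
    rw [div_eq_mul_inv, ← rpow_neg hst, neg_sub]
  rw [hdiv, hsplit]
  linear_combination hgap + hcross + p * s * htt

end BregmanBound

section Gradient

variable {E : Type*} [NormedAddCommGroup E] [InnerProductSpace ℝ E] [CompleteSpace E]
  {u v : E → ℝ} {x : E}

theorem hasGradientAt_sub_rpow_div_rpow_mul (p : ℝ) (hu : DifferentiableAt ℝ u x)
    (hv : DifferentiableAt ℝ v x) (hux : 0 < u x) (hvx : 0 < v x) :
    HasGradientAt (fun y => u y - (v y ^ p / u y ^ p) * u y)
      ((1 + (p - 1) * (v x ^ p / u x ^ p)) • gradient u x -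
        (p * (v x ^ p / u x ^ p) * (u x / v x)) • gradient v x) x := by
  have hu' := hu.hasGradientAt.hasFDerivAt
  have hv' := hv.hasGradientAt.hasFDerivAt
  have hinv : HasFDerivAt (fun y => (u y ^ p)⁻¹) _ x :=
    (hasDerivAt_inv (rpow_pos_of_pos hux p).ne').comp_hasFDerivAt x
      (hu'.rpow_const (p := p) (Or.inl hux.ne'))
  have h : HasFDerivAt (fun y => u y - (v y ^ p / u y ^ p) * u y) _ x :=
    hu'.sub (((hv'.rpow_const (p := p) (Or.inl hvx.ne')).fun_mul hinv).fun_mul hu')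
  rw [hasGradientAt_iff_hasFDerivAt]
  refine h.congr_fderiv ?_
  rw [rpow_sub_one hux.ne', rpow_sub_one hvx.ne']
  simp only [map_sub, map_smul]
  match_scalars
  · field_simp
    ring
  · field_simp

theorem norm_gradient_rpow_mul_inner_gradient_sub_rpow_div_rpow_mul {p : ℝ} (hp : p ≠ 0)
    (hu : DifferentiableAt ℝ u x) (hv : DifferentiableAt ℝ v x) (hux : 0 < u x) (hvx : 0 < v x) :
    ‖gradient u x‖ ^ (p - 2) *
        ⟪gradient u x, gradient (fun y => u y - (v y ^ p / u y ^ p) * u y) x⟫ =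
      u x ^ p * ‖(u x)⁻¹ • gradient u x‖ ^ p +
        v x ^ p * ((p - 1) * ‖(u x)⁻¹ • gradient u x‖ ^ p -
          p * ‖(u x)⁻¹ • gradient u x‖ ^ (p - 2) *
            ⟪(u x)⁻¹ • gradient u x, (v x)⁻¹ • gradient v x⟫) := by
  rw [(hasGradientAt_sub_rpow_div_rpow_mul p hu hv hux hvx).gradient]
  set a := (u x)⁻¹ • gradient u x
  set b := (v x)⁻¹ • gradient v x
  have hua : gradient u x = u x • a := (smul_inv_smul₀ hux.ne' _).symm
  have hvb : gradient v x = v x • b := (smul_inv_smul₀ hvx.ne' _).symm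
  have hU : u x ^ (p - 2) * u x ^ 2 = u x ^ p := rpow_sub_two_mul_sq hux.le hp
  have ha : ‖a‖ ^ (p - 2) * ‖a‖ ^ 2 = ‖a‖ ^ p := rpow_sub_two_mul_sq (norm_nonneg a) hp
  rw [hua, hvb, norm_smul, norm_of_nonneg hux.le, mul_rpow hux.le (norm_nonneg a)]
  simp only [inner_sub_right, inner_smul_left, inner_smul_right, real_inner_self_eq_norm_sq,
    conj_trivial]
  rw [← hU, ← ha]
  field_simp
  ring

end Gradient

theorem pointwise_lemma_p_lt_two (p : ℝ) (hp1 : 1 < p) (hp2 : p < 2) :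
    ∃ C : ℝ, 0 < C ∧
    ∀ (N : ℕ) (Ω : Set (EuclideanSpace ℝ (Fin N))), IsOpen Ω →
    ∀ (u v : EuclideanSpace ℝ (Fin N) → ℝ),
      (∀ x ∈ Ω, DifferentiableAt ℝ u x) → (∀ x ∈ Ω, DifferentiableAt ℝ v x) →
      (∀ x ∈ Ω, 0 < u x) → (∀ x ∈ Ω, 0 < v x) →
      ∀ x ∈ Ω, (u x)⁻¹ • gradient u x ≠ (v x)⁻¹ • gradient v x →
      ‖gradient u x‖ ^ (p - 2) *
          ⟪gradient u x, gradient (fun y => u y - (v y ^ p / u y ^ p) * u y) x⟫ +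
        ‖gradient v x‖ ^ (p - 2) *
          ⟪gradient v x, gradient (fun y => v y - (u y ^ p / v y ^ p) * v y) x⟫ ≥
        C * (u x ^ p + v x ^ p) *
          (‖(u x)⁻¹ • gradient u x - (v x)⁻¹ • gradient v x‖ ^ 2 /
            (‖(u x)⁻¹ • gradient u x‖ + ‖(v x)⁻¹ • gradient v x‖) ^ (2 - p)) := by
  refine ⟨p * (p - 1) / 2, by nlinarith, ?_⟩
  intro N Ω _ u v hu hv hu0 hv0 x hx _
  have hp0 : p ≠ 0 := by linarith
  rw [norm_gradient_rpow_mul_inner_gradient_sub_rpow_div_rpow_mul hp0 (hu x hx) (hv x hx)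
      (hu0 x hx) (hv0 x hx),
    norm_gradient_rpow_mul_inner_gradient_sub_rpow_div_rpow_mul hp0 (hv x hx) (hu x hx)
      (hv0 x hx) (hu0 x hx)]
  set a := (u x)⁻¹ • gradient u x
  set b := (v x)⁻¹ • gradient v x
  rw [real_inner_comm a b]
  have hab := norm_rpow_bregman_lower_bound hp1 hp2.le a b
  have hba := norm_rpow_bregman_lower_bound hp1 hp2.le b a
  rw [norm_sub_rev, add_comm ‖b‖, real_inner_comm] at hba
  have hup := rpow_nonneg (hu0 x hx).le p
  have hvp := rpow_nonneg (hv0 x hx).le p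
  have hsum := add_le_add (mul_le_mul_of_nonneg_left hab hup) (mul_le_mul_of_nonneg_left hba hvp)
  linarith
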